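/- Let K_n ∈ ℝ^{n×n} be symmetric positive semidefinite with spectral decomposition K_n = U diag(λ̂₁,…,λ̂ₙ) Uᵀ, λ̂₁ ≥ … ≥ λ̂ₙ ≥ 0, and let η > 0 satisfy η λ̂₁ ≤ 1. Let f ∈ ℝⁿ be such that [Uᵀf]_i = 0 whenever λ̂_i = 0 and Σ_{i: λ̂_i>0} [Uᵀf]_i² / λ̂_i ≤ n γ₀². Then for every integer t ≥ 1: ‖(I − η K_n)^t f‖₂² ≤ n γ₀² / (2 e η t). Moreover, if w ∈ ℝⁿ is a random vector with independent mean-zero σ₀²-sub-Gaussian coordinates, then there is a constant c > 0 depending only on σ₀ such that with probability at least 1 − exp(−c n): ‖(I − η K_n)^t w‖₂ ≤ (σ₀ + 1)√n; consequently, on this event, ‖(I − η K_n)^t f‖₂ + ‖(I − η K_n)^t w‖₂ ≤ ( γ₀/√(2eη t) + σ₀ + 1 ) √n. -/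

import Mathlib

open MeasureTheory Matrix

/-- The Euclidean norm of a vector in `ℝⁿ`. -/
noncomputable def vecNorm {n : ℕ} (v : Fin n → ℝ) : ℝ := Real.sqrt (∑ i, v i ^ 2)

/-!
Diagonalising, `(I - ηKₙ)ᵗ = U diag((1 - ηλ̂ᵢ)ᵗ) Uᵀ`, so
`‖(I - ηKₙ)ᵗ v‖² = ∑ᵢ (1 - ηλ̂ᵢ)²ᵗ [Uᵀv]ᵢ²`. For the bias term, write each summand with
`λ̂ᵢ > 0` as `(1 - x)²ᵗ x · [Uᵀf]ᵢ² / (ηλ̂ᵢ)` with `x = ηλ̂ᵢ ∈ [0, 1]`, and use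
`(1 - x)²ᵗ x ≤ e^{-2tx} x ≤ 1 / (2et)`. For the noise term, `I - ηKₙ` is a contraction, so it
suffices that `‖w‖² < (σ₀ + 1)² n` with probability `1 - e^{-cn}`: this is a Chernoff bound for
`∑ᵢ wᵢ²`, since a `σ²`-sub-Gaussian `w` has `E e^{s w²} ≤ (1 - 2sσ²)^{-1/2} ≤ e^{sσ²/(1 - 2sσ²)}`.
-/

open Real ProbabilityTheory Finset
open scoped NNReal

section Scalar

lemma one_sub_pow_two_mul_mul_le {x : ℝ} (hx₀ : 0 ≤ x) (hx₁ : x ≤ 1) {t : ℕ} (ht : 0 < t) :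
    (1 - x) ^ (2 * t) * x ≤ 1 / (2 * exp 1 * t) := by
  have ht' : (0 : ℝ) < 2 * t := by positivity
  have hexp : (1 - x) ^ (2 * t) ≤ exp (-(2 * t * x)) := by
    calc (1 - x) ^ (2 * t) ≤ exp (-x) ^ (2 * t) :=
          pow_le_pow_left₀ (by linarith) (one_sub_le_exp_neg x) _
      _ = exp (-(2 * t * x)) := by rw [← exp_nat_mul]; push_cast; ring_nf
  calc (1 - x) ^ (2 * t) * x ≤ exp (-(2 * t * x)) * x := by gcongr
    _ = (2 * t * x) * exp (-(2 * t * x)) / (2 * t) := by field_simp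
    _ ≤ exp (-1) / (2 * t) := by gcongr; exact mul_exp_neg_le_exp_neg_one _
    _ = 1 / (2 * exp 1 * t) := by rw [exp_neg]; field_simp

lemma one_div_sqrt_one_sub_le_exp {u : ℝ} (hu : u < 1) :
    1 / √(1 - u) ≤ exp (u / (2 * (1 - u))) := by
  have hu' : 0 < 1 - u := by linarith
  have hsq : 1 / (1 - u) ≤ exp (u / (2 * (1 - u))) ^ 2 := by
    calc 1 / (1 - u) = u / (1 - u) + 1 := by field_simp; ring
      _ ≤ exp (u / (1 - u)) := add_one_le_exp _
      _ = exp (u / (2 * (1 - u))) ^ 2 := by rw [← exp_nat_mul]; congr 1; field_simp; ring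
  calc 1 / √(1 - u) = √(1 / (1 - u)) := by rw [sqrt_div' _ hu'.le, sqrt_one]
    _ ≤ √(exp (u / (2 * (1 - u))) ^ 2) := sqrt_le_sqrt hsq
    _ = exp (u / (2 * (1 - u))) := sqrt_sq (exp_pos _).le

variable {ι : Type*} [Fintype ι] {lam g : ι → ℝ} {η : ℝ} {t : ℕ}

lemma sum_one_sub_pow_sq_mul_sq_le_sum_sq (hlam₀ : ∀ i, 0 ≤ η * lam i)
    (hlam₁ : ∀ i, η * lam i ≤ 1) : ∑ i, ((1 - η * lam i) ^ t) ^ 2 * g i ^ 2 ≤ ∑ i, g i ^ 2 := by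
  refine sum_le_sum fun i _ => mul_le_of_le_one_left (sq_nonneg _) ?_
  rw [← pow_mul]
  exact pow_le_one₀ (by linarith [hlam₁ i]) (by linarith [hlam₀ i])

lemma sum_one_sub_pow_sq_mul_sq_le (hη : 0 < η) (ht : 0 < t) (hlam₀ : ∀ i, 0 ≤ lam i)
    (hlam₁ : ∀ i, η * lam i ≤ 1) (hg : ∀ i, lam i = 0 → g i = 0) :
    ∑ i, ((1 - η * lam i) ^ t) ^ 2 * g i ^ 2 ≤
      (∑ i ∈ univ.filter (fun i => lam i ≠ 0), g i ^ 2 / lam i) / (2 * exp 1 * η * t) := by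
  rw [← sum_filter_of_ne (p := fun i => lam i ≠ 0) fun i _ hi h0 => by simp [hg i h0] at hi,
    sum_div]
  refine sum_le_sum fun i hi => ?_
  have hpos : 0 < lam i := (hlam₀ i).lt_of_ne (Ne.symm (mem_filter.1 hi).2)
  have key := one_sub_pow_two_mul_mul_le (mul_nonneg hη.le hpos.le) (hlam₁ i) ht
  calc ((1 - η * lam i) ^ t) ^ 2 * g i ^ 2
        = (1 - η * lam i) ^ (2 * t) * (η * lam i) * (g i ^ 2 / lam i) / η := by
          rw [← pow_mul, mul_comm t]; field_simp
    _ ≤ 1 / (2 * exp 1 * t) * (g i ^ 2 / lam i) / η := by gcongr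
    _ = g i ^ 2 / lam i / (2 * exp 1 * η * t) := by field_simp

end Scalar

section Spectral

lemma one_sub_smul_conj_diagonal_pow {ι R : Type*} [Fintype ι] [DecidableEq ι] [CommRing R]
    {U : Matrix ι ι R} (h₁ : U * Uᵀ = 1) (h₂ : Uᵀ * U = 1) (lam : ι → R) (η : R) (t : ℕ) :
    (1 - η • (U * diagonal lam * Uᵀ)) ^ t = U * diagonal (fun i => (1 - η * lam i) ^ t) * Uᵀ := by
  have hconj : 1 - η • (U * diagonal lam * Uᵀ) = U * diagonal (fun i => 1 - η * lam i) * Uᵀ := by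
    have hdiag : diagonal (fun i => 1 - η * lam i) = 1 - η • diagonal lam := by
      rw [← diagonal_one, ← diagonal_smul, ← diagonal_sub]; rfl
    rw [hdiag, Matrix.mul_sub, Matrix.sub_mul, Matrix.mul_one, h₁, Matrix.mul_smul, Matrix.smul_mul]
  rw [hconj, ← Pi.pow_def, ← diagonal_pow]
  exact Units.conj_pow ⟨U, Uᵀ, h₁, h₂⟩ _ t

variable {n : ℕ}

lemma vecNorm_sq (v : Fin n → ℝ) : vecNorm v ^ 2 = ∑ i, v i ^ 2 :=
  sq_sqrt (sum_nonneg fun _ _ => sq_nonneg _)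

lemma vecNorm_mulVec_of_transpose_mul_self {U : Matrix (Fin n) (Fin n) ℝ} (hU : Uᵀ * U = 1)
    (v : Fin n → ℝ) : vecNorm (U *ᵥ v) = vecNorm v := by
  have hdot : ∀ x : Fin n → ℝ, ∑ i, x i ^ 2 = x ⬝ᵥ x := fun x => by simp [dotProduct, sq]
  rw [vecNorm, vecNorm, hdot, hdot, dotProduct_mulVec, ← mulVec_transpose, mulVec_mulVec, hU,
    one_mulVec]

lemma vecNorm_sq_one_sub_smul_pow_mulVec {U : Matrix (Fin n) (Fin n) ℝ} (h₁ : U * Uᵀ = 1)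
    (h₂ : Uᵀ * U = 1) (lam : Fin n → ℝ) (η : ℝ) (t : ℕ) (v : Fin n → ℝ) :
    vecNorm (((1 - η • (U * diagonal lam * Uᵀ)) ^ t) *ᵥ v) ^ 2 =
      ∑ i, ((1 - η * lam i) ^ t) ^ 2 * (Uᵀ *ᵥ v) i ^ 2 := by
  rw [one_sub_smul_conj_diagonal_pow h₁ h₂, ← mulVec_mulVec, ← mulVec_mulVec,
    vecNorm_mulVec_of_transpose_mul_self h₂, vecNorm_sq]
  simp [mulVec_diagonal, mul_pow]

lemma vecNorm_one_sub_smul_pow_mulVec_le {U : Matrix (Fin n) (Fin n) ℝ} (h₁ : U * Uᵀ = 1)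
    (h₂ : Uᵀ * U = 1) {lam : Fin n → ℝ} {η : ℝ} (hlam₀ : ∀ i, 0 ≤ η * lam i)
    (hlam₁ : ∀ i, η * lam i ≤ 1) (t : ℕ) (v : Fin n → ℝ) :
    vecNorm (((1 - η • (U * diagonal lam * Uᵀ)) ^ t) *ᵥ v) ≤ vecNorm v := by
  rw [← vecNorm_mulVec_of_transpose_mul_self (U := Uᵀ) (by rwa [transpose_transpose]) v,
    ← sq_le_sq₀ (by exact sqrt_nonneg _) (by exact sqrt_nonneg _)]
  rw [vecNorm_sq_one_sub_smul_pow_mulVec h₁ h₂, vecNorm_sq]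
  exact sum_one_sub_pow_sq_mul_sq_le_sum_sq hlam₀ hlam₁

lemma vecNorm_sq_one_sub_smul_pow_mulVec_le {U : Matrix (Fin n) (Fin n) ℝ} (h₁ : U * Uᵀ = 1)
    (h₂ : Uᵀ * U = 1) {lam : Fin n → ℝ} {η : ℝ} {t : ℕ} (hη : 0 < η) (ht : 0 < t)
    (hlam₀ : ∀ i, 0 ≤ lam i) (hlam₁ : ∀ i, η * lam i ≤ 1) {v : Fin n → ℝ}
    (hv : ∀ i, lam i = 0 → (Uᵀ *ᵥ v) i = 0) :
    vecNorm (((1 - η • (U * diagonal lam * Uᵀ)) ^ t) *ᵥ v) ^ 2 ≤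
      (∑ i ∈ univ.filter (fun i => lam i ≠ 0), (Uᵀ *ᵥ v) i ^ 2 / lam i) / (2 * exp 1 * η * t) := by
  rw [vecNorm_sq_one_sub_smul_pow_mulVec h₁ h₂]
  exact sum_one_sub_pow_sq_mul_sq_le hη ht hlam₀ hlam₁ hv

end Spectral

open scoped ENNReal

section Gaussian

lemma lintegral_ofReal_exp_neg_mul_sq {a : ℝ} (ha : 0 < a) :
    ∫⁻ x, ENNReal.ofReal (exp (-a * x ^ 2)) = ENNReal.ofReal √(π / a) := by
  rw [← ofReal_integral_eq_lintegral_ofReal (integrable_exp_neg_mul_sq ha)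
    (ae_of_all _ fun _ => (exp_pos _).le), integral_gaussian]

lemma lintegral_ofReal_exp_neg_half_mul_sq_add_mul (b : ℝ) :
    ∫⁻ x, ENNReal.ofReal (exp (-(1 / 2) * x ^ 2 + b * x)) =
      ENNReal.ofReal √(2 * π) * ENNReal.ofReal (exp (b ^ 2 / 2)) := by
  have hsquare (x : ℝ) : ENNReal.ofReal (exp (-(1 / 2) * x ^ 2 + b * x)) =
      ENNReal.ofReal (exp (b ^ 2 / 2)) * ENNReal.ofReal (exp (-(1 / 2) * (x - b) ^ 2)) := by
    rw [← ENNReal.ofReal_mul (exp_pos _).le, ← exp_add]; ring_nf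
  simp_rw [hsquare]
  rw [lintegral_const_mul' _ _ ENNReal.ofReal_ne_top,
    lintegral_sub_right_eq_self (fun x => ENNReal.ofReal (exp (-(1 / 2) * x ^ 2))) b,
    lintegral_ofReal_exp_neg_mul_sq one_half_pos, mul_comm]
  congr 3
  ring

end Gaussian

namespace ProbabilityTheory.HasSubgaussianMGF

variable {Ω : Type*} {mΩ : MeasurableSpace Ω} {μ : Measure Ω} {X : Ω → ℝ} {c : ℝ≥0}

lemma lintegral_ofReal_exp_mul_le (h : HasSubgaussianMGF X c μ) (t : ℝ) :
    ∫⁻ ω, ENNReal.ofReal (exp (t * X ω)) ∂μ ≤ ENNReal.ofReal (exp (c * t ^ 2 / 2)) := by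
  rw [← ofReal_integral_eq_lintegral_ofReal (h.integrable_exp_mul t)
    (ae_of_all _ fun _ => (exp_pos _).le)]
  exact ENNReal.ofReal_le_ofReal (h.mgf_le t)

/-- Writing `exp (s x²)` as a Gaussian average of `exp (√(2s) y x)` reduces the bound to the
moment generating function of `X`. -/
lemma lintegral_ofReal_exp_mul_sq_le [SFinite μ] (h : HasSubgaussianMGF X c μ) {s : ℝ}
    (hs : 0 ≤ s) (hsc : 2 * s * c < 1) :
    ∫⁻ ω, ENNReal.ofReal (exp (s * X ω ^ 2)) ∂μ ≤ ENNReal.ofReal (1 / √(1 - 2 * s * c)) := by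
  set C := ENNReal.ofReal √(2 * π)
  have hC₀ : C ≠ 0 := by simp [C, pi_pos]
  set F : Ω → ℝ → ℝ≥0∞ := fun ω y =>
    ENNReal.ofReal (exp (-(1 / 2) * y ^ 2 + (√(2 * s) * X ω) * y))
  have hF : ∀ ω, C * ENNReal.ofReal (exp (s * X ω ^ 2)) = ∫⁻ y, F ω y := fun ω => by
    rw [lintegral_ofReal_exp_neg_half_mul_sq_add_mul, mul_pow, sq_sqrt (by positivity)]
    congr 3
    ring
  have hFmeas : AEMeasurable (Function.uncurry F) (μ.prod volume) := by
    refine ENNReal.measurable_ofReal.comp_aemeasurable (measurable_exp.comp_aemeasurable ?_)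
    exact (measurable_snd.pow_const 2).aemeasurable.const_mul _ |>.add
      (((h.aemeasurable.comp_fst).const_mul _).mul measurable_snd.aemeasurable)
  have hinner : ∀ y, ∫⁻ ω, F ω y ∂μ ≤ ENNReal.ofReal (exp (-((1 - 2 * s * c) / 2) * y ^ 2)) := by
    intro y
    have hsplit : ∀ ω, F ω y = ENNReal.ofReal (exp (-(1 / 2) * y ^ 2)) *
        ENNReal.ofReal (exp ((√(2 * s) * y) * X ω)) := fun ω => by
      rw [← ENNReal.ofReal_mul (exp_pos _).le, ← exp_add]; simp only [F]; ring_nf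
    simp_rw [hsplit]
    rw [lintegral_const_mul' _ _ ENNReal.ofReal_ne_top]
    calc _ ≤ ENNReal.ofReal (exp (-(1 / 2) * y ^ 2)) *
          ENNReal.ofReal (exp (c * (√(2 * s) * y) ^ 2 / 2)) := by
          gcongr; exact h.lintegral_ofReal_exp_mul_le _
      _ = _ := by
        rw [← ENNReal.ofReal_mul (exp_pos _).le, ← exp_add, mul_pow, sq_sqrt (by positivity)]
        ring_nf
  have hbound : C * ∫⁻ ω, ENNReal.ofReal (exp (s * X ω ^ 2)) ∂μ ≤
      C * ENNReal.ofReal (1 / √(1 - 2 * s * c)) := by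
    calc C * ∫⁻ ω, ENNReal.ofReal (exp (s * X ω ^ 2)) ∂μ = ∫⁻ ω, (∫⁻ y, F ω y) ∂μ := by
          rw [← lintegral_const_mul' _ _ ENNReal.ofReal_ne_top]; exact lintegral_congr hF
      _ = ∫⁻ y, ∫⁻ ω, F ω y ∂μ := lintegral_lintegral_swap hFmeas
      _ ≤ ∫⁻ y, ENNReal.ofReal (exp (-((1 - 2 * s * c) / 2) * y ^ 2)) := lintegral_mono hinner
      _ = C * ENNReal.ofReal (1 / √(1 - 2 * s * c)) := by
        rw [lintegral_ofReal_exp_neg_mul_sq (by linarith), ← ENNReal.ofReal_mul (sqrt_nonneg _),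
          div_div_eq_mul_div, mul_comm π, ← mul_one_div, sqrt_mul (by positivity),
          sqrt_div' _ (by linarith), sqrt_one]
  exact (ENNReal.mul_le_mul_iff_right hC₀ ENNReal.ofReal_ne_top).1 hbound

end ProbabilityTheory.HasSubgaussianMGF

section Concentration

variable {Ω ι : Type*} {mΩ : MeasurableSpace Ω} {μ : Measure Ω} [Fintype ι] {X : ι → Ω → ℝ}
  {c : ℝ≥0}

lemma lintegral_ofReal_exp_mul_sum_sq_eq_prod (hind : iIndepFun X μ)
    (hXm : ∀ i, Measurable (X i)) (s : ℝ) :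
    ∫⁻ ω, ENNReal.ofReal (exp (s * ∑ i, X i ω ^ 2)) ∂μ =
      ∏ i, ∫⁻ ω, ENNReal.ofReal (exp (s * X i ω ^ 2)) ∂μ := by
  have hprod : ∀ ω, ENNReal.ofReal (exp (s * ∑ i, X i ω ^ 2)) =
      ∏ i, ENNReal.ofReal (exp (s * X i ω ^ 2)) := fun ω => by
    rw [mul_sum, exp_sum, ENNReal.ofReal_prod_of_nonneg fun i _ => (exp_pos _).le]
  simp_rw [hprod]
  exact lintegral_prod_eq_prod_lintegral_of_indepFun univ _
    (hind.comp (fun _ x => ENNReal.ofReal (exp (s * x ^ 2))) fun _ => by fun_prop)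
    fun i => by fun_prop

/-- Markov's inequality for `exp (s ∑ Xᵢ²)` with `s = (r - c) / (2c(r + c))`. -/
theorem measure_le_sum_sq_le_of_iIndepFun (hind : iIndepFun X μ) (hXm : ∀ i, Measurable (X i))
    (hX : ∀ i, HasSubgaussianMGF (X i) c μ) (hc : 0 < c) {r : ℝ} (hcr : c < r) :
    μ {ω | r * Fintype.card ι ≤ ∑ i, X i ω ^ 2} ≤
      ENNReal.ofReal (exp (-((r - c) ^ 2 / (4 * c * (r + c)) * Fintype.card ι))) := by
  have := hind.isProbabilityMeasure
  have hc' : (0 : ℝ) < c := hc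
  set N : ℝ := (Fintype.card ι : ℝ)
  have hrc : 0 < r + c := by linarith
  set s := (r - c) / (2 * c * (r + c)) with hs_def
  have hs : 0 ≤ s := div_nonneg (by linarith) (by positivity)
  have h1sc : 1 - 2 * s * c = 2 * c / (r + c) := by rw [hs_def]; field_simp; ring
  have hsc : 2 * s * c < 1 := by linarith [show 0 < 2 * (c : ℝ) / (r + c) by positivity]
  have hcoord : ∀ i, ∫⁻ ω, ENNReal.ofReal (exp (s * X i ω ^ 2)) ∂μ ≤
      ENNReal.ofReal (exp ((r - c) / (4 * c))) := fun i =>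
    ((hX i).lintegral_ofReal_exp_mul_sq_le hs hsc).trans <| ENNReal.ofReal_le_ofReal <|
      (one_div_sqrt_one_sub_le_exp hsc).trans_eq (by rw [h1sc, hs_def]; congr 1; field_simp; ring)
  have hmoment : ∫⁻ ω, ENNReal.ofReal (exp (s * ∑ i, X i ω ^ 2)) ∂μ ≤
      ENNReal.ofReal (exp ((r - c) / (4 * c) * N)) := by
    rw [lintegral_ofReal_exp_mul_sum_sq_eq_prod hind hXm]
    calc _ ≤ ∏ _i : ι, ENNReal.ofReal (exp ((r - c) / (4 * c))) := prod_le_prod' fun i _ => hcoord i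
      _ = _ := by
        rw [prod_const, card_univ, ← ENNReal.ofReal_pow (exp_pos _).le, ← exp_nat_mul, mul_comm]
  have hthreshold : 0 < exp (s * (r * N)) := exp_pos _
  calc μ {ω | r * N ≤ ∑ i, X i ω ^ 2}
      ≤ μ {ω | ENNReal.ofReal (exp (s * (r * N))) ≤ ENNReal.ofReal (exp (s * ∑ i, X i ω ^ 2))} :=
        measure_mono fun ω hω => ENNReal.ofReal_le_ofReal (exp_le_exp.2 (by gcongr; exact hω))
    _ ≤ (∫⁻ ω, ENNReal.ofReal (exp (s * ∑ i, X i ω ^ 2)) ∂μ) / ENNReal.ofReal (exp (s * (r * N))) :=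
        meas_ge_le_lintegral_div (by fun_prop) (by simpa using hthreshold) ENNReal.ofReal_ne_top
    _ ≤ ENNReal.ofReal (exp ((r - c) / (4 * c) * N)) / ENNReal.ofReal (exp (s * (r * N))) := by
        gcongr
    _ = ENNReal.ofReal (exp (-((r - c) ^ 2 / (4 * c * (r + c)) * N))) := by
        rw [← ENNReal.ofReal_div_of_pos hthreshold, ← exp_sub]
        congr 2
        rw [hs_def]
        field_simp
        ring

end Concentration

lemma ofReal_one_sub_exp_le_measure_pi_vecNorm_le {n : ℕ} {ν : Fin n → Measure ℝ}
    [∀ i, IsProbabilityMeasure (ν i)] {c : ℝ≥0} (hν : ∀ i, HasSubgaussianMGF id c (ν i))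
    (hc : 0 < c) {r : ℝ} (hcr : c < r) :
    ENNReal.ofReal (1 - exp (-((r - c) ^ 2 / (4 * c * (r + c)) * n))) ≤
      Measure.pi ν {w | vecNorm w ≤ √r * √n} := by
  have hX : ∀ i, HasSubgaussianMGF (fun w : Fin n → ℝ => w i) c (Measure.pi ν) := fun i =>
    .of_map (X := id) (measurable_pi_apply i).aemeasurable
      ((measurePreserving_eval ν i).map_eq ▸ hν i)
  have htail := measure_le_sum_sq_le_of_iIndepFun
    (iIndepFun_pi (X := fun _ => id) fun _ => aemeasurable_id) measurable_pi_apply hX hc hcr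
  rw [Fintype.card_fin] at htail
  set S := {w : Fin n → ℝ | vecNorm w ≤ √r * √n}
  have hS : MeasurableSet S := measurableSet_le (by unfold vecNorm; fun_prop) measurable_const
  have hSc : Sᶜ ⊆ {w | r * n ≤ ∑ i, w i ^ 2} := fun w hw => by
    have hr : 0 ≤ r := c.2.trans hcr.le
    replace hw : √r * √n < vecNorm w := not_le.1 hw
    rw [← sqrt_mul hr, vecNorm, sqrt_lt_sqrt_iff (by positivity)] at hw
    exact hw.le
  calc ENNReal.ofReal (1 - exp (-((r - c) ^ 2 / (4 * c * (r + c)) * n)))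
      = 1 - ENNReal.ofReal (exp (-((r - c) ^ 2 / (4 * c * (r + c)) * n))) := by
        rw [ENNReal.ofReal_sub _ (exp_pos _).le, ENNReal.ofReal_one]
    _ ≤ 1 - Measure.pi ν Sᶜ := tsub_le_tsub_left ((measure_mono hSc).trans htail) 1
    _ = Measure.pi ν S := by
        rw [prob_compl_eq_one_sub hS, ENNReal.sub_sub_cancel ENNReal.one_ne_top prob_le_one]

/-- Let `K_n = U diag(λ̂) Uᵀ` be symmetric PSD with nonincreasing eigenvalues, `η λ̂₁ ≤ 1`, and
let `f ∈ ℝⁿ` satisfy `[Uᵀf]_i = 0` when `λ̂_i = 0` and `Σ_{λ̂_i>0} [Uᵀf]_i²/λ̂_i ≤ nγ₀²`.  Then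
for every `t ≥ 1`: `‖(I − ηK_n)^t f‖² ≤ nγ₀²/(2eηt)`.  Moreover, if `w` has independent
mean-zero `σ₀²`-sub-Gaussian coordinates, then for some `c > 0` depending only on `σ₀`, with
probability at least `1 − exp(−cn)`: `‖(I − ηK_n)^t w‖ ≤ (σ₀+1)√n`, and consequently
`‖(I−ηK_n)^t f‖ + ‖(I−ηK_n)^t w‖ ≤ (γ₀/√(2eηt) + σ₀ + 1)√n`. -/
theorem gd_residual_norm_bound (σ₀ : ℝ) (hσ₀ : 0 < σ₀) :
    ∃ c > (0 : ℝ),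
      ∀ (n : ℕ) (hn : 0 < n) (U Kn : Matrix (Fin n) (Fin n) ℝ) (lam : Fin n → ℝ)
        (η γ₀ : ℝ) (f : Fin n → ℝ),
        U * Uᵀ = 1 → Uᵀ * U = 1 →
        Kn = U * Matrix.diagonal lam * Uᵀ →
        (∀ i, 0 ≤ lam i) → (∀ i j : Fin n, i ≤ j → lam j ≤ lam i) →
        0 < η → η * lam ⟨0, hn⟩ ≤ 1 → 0 < γ₀ →
        (∀ i, lam i = 0 → Uᵀ.mulVec f i = 0) →
        (∑ i ∈ Finset.univ.filter fun i => lam i ≠ 0,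
            (Uᵀ.mulVec f i) ^ 2 / lam i) ≤ n * γ₀ ^ 2 →
      ∀ (ν : Fin n → Measure ℝ), (∀ i, IsProbabilityMeasure (ν i)) →
        (∀ (i : Fin n) (l : ℝ),
          Integrable (fun s => Real.exp (l * s)) (ν i) ∧
            ∫ s, Real.exp (l * s) ∂(ν i) ≤ Real.exp (l ^ 2 * σ₀ ^ 2 / 2)) →
      ∀ t : ℕ, 1 ≤ t →
        vecNorm ((((1 : Matrix (Fin n) (Fin n) ℝ) - η • Kn) ^ t).mulVec f) ^ 2 ≤
            n * γ₀ ^ 2 / (2 * Real.exp 1 * η * t) ∧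
        (Measure.pi ν)
            {w : Fin n → ℝ |
              vecNorm ((((1 : Matrix (Fin n) (Fin n) ℝ) - η • Kn) ^ t).mulVec w) ≤
                  (σ₀ + 1) * Real.sqrt n ∧
                vecNorm ((((1 : Matrix (Fin n) (Fin n) ℝ) - η • Kn) ^ t).mulVec f) +
                    vecNorm ((((1 : Matrix (Fin n) (Fin n) ℝ) - η • Kn) ^ t).mulVec w) ≤
                  (γ₀ / Real.sqrt (2 * Real.exp 1 * η * t) + σ₀ + 1) * Real.sqrt n} ≥
          ENNReal.ofReal (1 - Real.exp (-(c * n))) := by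
  have hvr : σ₀ ^ 2 < (σ₀ + 1) ^ 2 := by nlinarith
  refine ⟨(2 * σ₀ + 1) ^ 2 / (4 * σ₀ ^ 2 * ((σ₀ + 1) ^ 2 + σ₀ ^ 2)), by positivity, ?_⟩
  intro n hn U Kn lam η γ₀ f h₁ h₂ hK hlam₀ hmono hη hηlam hγ₀ hf₀ hf ν hν hmgf t ht
  subst hK
  have hlam₁ : ∀ i, η * lam i ≤ 1 := fun i =>
    (mul_le_mul_of_nonneg_left (hmono _ i (Nat.zero_le _)) hη.le).trans hηlam
  have hbias := (vecNorm_sq_one_sub_smul_pow_mulVec_le h₁ h₂ hη ht hlam₀ hlam₁ hf₀).trans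
    (div_le_div_of_nonneg_right hf (by positivity))
  refine ⟨hbias, ?_⟩
  have hv : ((σ₀ ^ 2).toNNReal : ℝ) = σ₀ ^ 2 := Real.coe_toNNReal _ (sq_nonneg σ₀)
  have hsubG : ∀ i, HasSubgaussianMGF id (σ₀ ^ 2).toNNReal (ν i) := fun i =>
    ⟨fun l => (hmgf i l).1, fun l => (hmgf i l).2.trans_eq (by rw [hv]; ring_nf)⟩
  have hnoise := ofReal_one_sub_exp_le_measure_pi_vecNorm_le hsubG
    (Real.toNNReal_pos.2 (by positivity)) (by rwa [hv])
  rw [hv, sqrt_sq (by linarith), show (σ₀ + 1) ^ 2 - σ₀ ^ 2 = 2 * σ₀ + 1 by ring] at hnoise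
  refine hnoise.trans (measure_mono fun w hw => ?_)
  have hw' := (vecNorm_one_sub_smul_pow_mulVec_le h₁ h₂
    (fun i => mul_nonneg hη.le (hlam₀ i)) hlam₁ t w).trans hw
  have hsqrt : √(n * γ₀ ^ 2 / (2 * exp 1 * η * t)) = γ₀ / √(2 * exp 1 * η * t) * √n := by
    rw [sqrt_div' _ (by positivity), sqrt_mul' _ (sq_nonneg _), sqrt_sq hγ₀.le]; ring
  have hfnorm := (le_abs_self _).trans (abs_le_sqrt hbias)
  rw [hsqrt] at hfnorm
  exact ⟨hw', (add_le_add hfnorm hw').trans_eq (by ring)⟩
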